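/- Suppose u₁, u₂ are two stabilizing feedback controllers with cost-to-go functions J₁, J₂, where J₁ is continuously differentiable, and suppose for every x the Hamiltonian inequality ∇J₁(x)·(f(x) + G(x)u₂(x)) + L(x, u₂(x)) ≤ ∇J₁(x)·(f(x) + G(x)u₁(x)) + L(x, u₁(x)) = 0 holds. Then J₂(x) ≤ J₁(x) for all x, assuming trajectories under u₂ drive J₁(x(t)) → 0 as t → ∞. -/

import Mathlib

open Set MeasureTheory Filter
open scoped RealInnerProductSpace

/-! Along a trajectory of the `u₂` closed loop, the Hamiltonian inequality together with the
GHJB equation for `u₁` says `d/dt J₁(x t) ≤ -L(x t, u₂(x t))`. Integrating over `[0, T]` and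
letting `T → ∞`, with `J₁(x T) → 0`, bounds the cost of `u₂` by `J₁(x 0)`. -/

theorem HasGradientAt.comp_hasDerivAt {F : Type*} [NormedAddCommGroup F] [InnerProductSpace ℝ F]
    [CompleteSpace F] {J : F → ℝ} {p : F} {x : ℝ → F} {v : F} {t : ℝ}
    (hJ : HasGradientAt J p (x t)) (hx : HasDerivAt x v t) :
    HasDerivAt (fun s => J (x s)) ⟪p, v⟫ t :=
  hJ.hasFDerivAt.comp_hasDerivAt t hx

theorem integral_Ioi_le_of_hasDerivAt_of_le {g g' φ : ℝ → ℝ} {a l : ℝ}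
    (hderiv : ∀ t ∈ Ici a, HasDerivAt g (g' t) t) (hφ : IntegrableOn φ (Ioi a))
    (hle : ∀ t ∈ Ioi a, φ t ≤ g' t) (hg : Tendsto g atTop (nhds l)) :
    ∫ t in Ioi a, φ t ≤ l - g a := by
  have hfinite : ∀ T ∈ Ici a, ∫ t in a..T, φ t ≤ g T - g a := fun T hT =>
    intervalIntegral.integral_le_sub_of_hasDeriv_right_of_le hT
      (fun t ht => (hderiv t ht.1).continuousAt.continuousWithinAt)
      (fun t ht => (hderiv t ht.1.le).hasDerivWithinAt)
      ((integrableOn_Icc_iff_integrableOn_Ioc).2 (hφ.mono_set Ioc_subset_Ioi_self))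
      (fun t ht => hle t ht.1)
  exact le_of_tendsto_of_tendsto (intervalIntegral_tendsto_integral_Ioi a hφ tendsto_id)
    (hg.sub_const (g a)) (eventually_atTop.2 ⟨a, hfinite⟩)

theorem policy_improvement_general {n m : ℕ}
    (f : EuclideanSpace ℝ (Fin n) → EuclideanSpace ℝ (Fin n))
    (G : EuclideanSpace ℝ (Fin n) → (EuclideanSpace ℝ (Fin m) →L[ℝ] EuclideanSpace ℝ (Fin n)))
    (L : EuclideanSpace ℝ (Fin n) → EuclideanSpace ℝ (Fin m) → ℝ)
    (u₁ u₂ : EuclideanSpace ℝ (Fin n) → EuclideanSpace ℝ (Fin m))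
    (J₁ : EuclideanSpace ℝ (Fin n) → ℝ) (g : EuclideanSpace ℝ (Fin n) → EuclideanSpace ℝ (Fin n))
    (hJ₁ : ∀ y, HasGradientAt J₁ (g y) y)
    (hGHJB₁ : ∀ y, ⟪g y, f y + G y (u₁ y)⟫ + L y (u₁ y) = 0)
    (hineq : ∀ y, ⟪g y, f y + G y (u₂ y)⟫ + L y (u₂ y) ≤
      ⟪g y, f y + G y (u₁ y)⟫ + L y (u₁ y)) :
    ∀ (x₀ : EuclideanSpace ℝ (Fin n)) (x : ℝ → EuclideanSpace ℝ (Fin n)),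
      x 0 = x₀ →
      (∀ t, HasDerivAt x (f (x t) + G (x t) (u₂ (x t))) t) →
      IntegrableOn (fun t => L (x t) (u₂ (x t))) (Ioi 0) →
      Tendsto (fun t => J₁ (x t)) atTop (nhds 0) →
      ∫ t in Ioi (0 : ℝ), L (x t) (u₂ (x t)) ≤ J₁ x₀ := by
  rintro x₀ x rfl hx hcost hlim
  have hdecay : ∀ t, L (x t) (u₂ (x t)) ≤ -⟪g (x t), f (x t) + G (x t) (u₂ (x t))⟫ :=
    fun t => by linarith [hineq (x t), hGHJB₁ (x t)]
  simpa using integral_Ioi_le_of_hasDerivAt_of_le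
    (fun t _ => ((hJ₁ (x t)).comp_hasDerivAt (hx t)).neg) hcost (fun t _ => hdecay t) hlim.neg

/-- Policy improvement: if the Hamiltonian of `u₂` with respect to `∇J₁` is no larger
than that of `u₁` (which is zero by the GHJB equation for `u₁`), then the cost-to-go
of `u₂` is no larger than `J₁`. -/
theorem policy_improvement {n m : ℕ}
    (f : EuclideanSpace ℝ (Fin n) → EuclideanSpace ℝ (Fin n))
    (G : EuclideanSpace ℝ (Fin n) → (EuclideanSpace ℝ (Fin m) →L[ℝ] EuclideanSpace ℝ (Fin n)))
    (L : EuclideanSpace ℝ (Fin n) → EuclideanSpace ℝ (Fin m) → ℝ)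
    (u₁ u₂ : EuclideanSpace ℝ (Fin n) → EuclideanSpace ℝ (Fin m))
    (J₁ : EuclideanSpace ℝ (Fin n) → ℝ) (g : EuclideanSpace ℝ (Fin n) → EuclideanSpace ℝ (Fin n))
    (hL : ∀ y u, 0 ≤ L y u)
    (hJ₁ : ∀ y, HasGradientAt J₁ (g y) y)
    (hGHJB₁ : ∀ y, ⟪g y, f y + G y (u₁ y)⟫ + L y (u₁ y) = 0)
    (hineq : ∀ y, ⟪g y, f y + G y (u₂ y)⟫ + L y (u₂ y) ≤
      ⟪g y, f y + G y (u₁ y)⟫ + L y (u₁ y)) :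
    ∀ (x₀ : EuclideanSpace ℝ (Fin n)) (x : ℝ → EuclideanSpace ℝ (Fin n)),
      x 0 = x₀ →
      (∀ t, HasDerivAt x (f (x t) + G (x t) (u₂ (x t))) t) →
      IntegrableOn (fun t => L (x t) (u₂ (x t))) (Ioi 0) →
      Tendsto (fun t => J₁ (x t)) atTop (nhds 0) →
      ∫ t in Ioi (0 : ℝ), L (x t) (u₂ (x t)) ≤ J₁ x₀ :=
  policy_improvement_general f G L u₁ u₂ J₁ g hJ₁ hGHJB₁ hineq
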